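/- Let m ≡ 0 (mod 4) with m ≥ 8, n = 2^m − 1, let h be an integer with 0 < h ≤ (m−4)/2, and a = 2^{(m+2)/2} − 1. Then: (i) if h is odd, then for every integer k with 1 ≤ k ≤ 2^{(m−2)/2} or with 2^m − 2^{(m−2)/2} − 1 ≤ k ≤ 2^m − 2, the residue a·k mod n lies in D_{(1,m)}; (ii) if h is even, then for every integer k with 1 ≤ k ≤ 2^{(m−2)/2} + 2 or with 2^m − 2^{(m−2)/2} − 1 ≤ k ≤ 2^m − 2, the residue a·k mod n lies in D_{(1,m)}. -/

import Mathlib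

/-!
For even `m` the parity `vv m x` is the parity of the binary weight of `x`: multiplication by
`2` modulo `2 ^ m - 1` rotates the `m`-bit expansion of `x`, so among the `m` rotations exactly
`m - wt2 x` are even, and these are `m / ℓ` copies of the `ρ` even elements of the coset.

Write `m = 2 s + 2` with `s` odd. For `1 ≤ k ≤ 2 ^ s` the residue `(2 ^ (s + 2) - 1) k` has
weight `s + 2`, and its negative modulo `2 ^ m - 1` has weight `s`. Both weights are odd and
exceed `h`, so the coset leader is neither `1` nor an odd number below `2 ^ h`, and
`uu = vv = 1`. For even `h` the two extra values `k = 2 ^ s + 1, 2 ^ s + 2` give `3 · 2 ^ s`,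
whose leader is `3` with `κ = 1` and `vv = 0`, and `7 · 2 ^ s - 1`, of weight `s + 2`.
-/

open Polynomial

noncomputable def wt2 (a : ℕ) : ℕ := (Nat.digits 2 a).sum

noncomputable def ell (m i : ℕ) : ℕ :=
  sInf {l : ℕ | 0 < l ∧ i * 2 ^ l % (2 ^ m - 1) = i % (2 ^ m - 1)}

noncomputable def coset (m i : ℕ) : Finset ℕ :=
  (Finset.range (ell m i)).image (fun j => i * 2 ^ j % (2 ^ m - 1))

noncomputable def rho (m i : ℕ) : ℕ := ((coset m i).filter (fun x => x % 2 = 0)).card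

noncomputable def vv (m i : ℕ) : ℕ := m * rho m i / ell m i % 2

noncomputable def Tset (m j : ℕ) : Finset ℕ :=
  (Finset.range (2 ^ m - 1)).filter (fun i => vv m i = j)

noncomputable def Nset (m j : ℕ) : Finset ℕ :=
  (Finset.range (2 ^ m - 1)).filter (fun a => a ≠ 0 ∧ wt2 a % 2 = j)

noncomputable def epsilon (h a : ℕ) : ℕ :=
  if a = 2 ^ h - 1 then 1 else sInf {t : ℕ | 2 ^ h - 1 ≤ 2 ^ t * a}

noncomputable def kappa (h a : ℕ) : ℕ := epsilon h a % 2

noncomputable def leader (m i : ℕ) : ℕ := sInf {x : ℕ | x ∈ coset m i}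

noncomputable def uu (m h i : ℕ) : ℕ :=
  if leader m i = 1 then (vv m 1 + h + 1) % 2
  else if leader m i % 2 = 1 ∧ leader m i ≤ 2 ^ h - 1 then
    (kappa h (leader m i) + vv m (leader m i)) % 2
  else vv m (leader m i)

noncomputable def Dset (m h j : ℕ) : Finset ℕ :=
  (Finset.range (2 ^ m - 1)).filter (fun i => uu m h i = j)

noncomputable def cyclicCode (m : ℕ) (α : GaloisField 2 m) (T : Set ℕ) :
    Submodule (ZMod 2) (Polynomial (ZMod 2)) :=
  Polynomial.degreeLT (ZMod 2) (2 ^ m - 1) ⊓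
    ⨅ j ∈ T, LinearMap.ker (Polynomial.aeval (α ^ j)).toLinearMap

def minDistGE (C : Submodule (ZMod 2) (Polynomial (ZMod 2))) (d : ℕ) : Prop :=
  ∀ c ∈ C, c ≠ 0 → d ≤ c.support.card

open Finset

section BinaryWeight

lemma wt2_two_mul_add (x : ℕ) {b : ℕ} (hb : b < 2) : wt2 (2 * x + b) = wt2 x + b := by
  rcases Nat.eq_zero_or_pos (2 * x + b) with h | h
  · obtain ⟨rfl, rfl⟩ : x = 0 ∧ b = 0 := by omega
    simp [wt2]
  · rw [wt2, Nat.digits_def' (by norm_num) h, List.sum_cons, wt2]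
    have hmod : (2 * x + b) % 2 = b := by omega
    have hdiv : (2 * x + b) / 2 = x := by omega
    rw [hmod, hdiv, add_comm]

lemma wt2_eq_wt2_div_two_add (x : ℕ) : wt2 x = wt2 (x / 2) + x % 2 := by
  conv_lhs => rw [← Nat.div_add_mod x 2]
  exact wt2_two_mul_add _ (Nat.mod_lt _ two_pos)

lemma wt2_mul_two_pow_add (q : ℕ) {s r : ℕ} (hr : r < 2 ^ s) :
    wt2 (q * 2 ^ s + r) = wt2 q + wt2 r := by
  induction s generalizing r with
  | zero => obtain rfl : r = 0 := by omega
            simp [wt2]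
  | succ s ih =>
    have hsplit : q * 2 ^ (s + 1) + r = 2 * (q * 2 ^ s + r / 2) + r % 2 := by
      rw [pow_succ, ← mul_assoc]; omega
    have hr2 : r / 2 < 2 ^ s := by rw [pow_succ] at hr; omega
    rw [hsplit, wt2_two_mul_add _ (Nat.mod_lt _ two_pos), ih hr2, add_assoc,
      ← wt2_two_mul_add _ (Nat.mod_lt _ two_pos), Nat.div_add_mod]

lemma wt2_add_wt2_two_pow_sub_one_sub {s x : ℕ} (hx : x < 2 ^ s) :
    wt2 x + wt2 (2 ^ s - 1 - x) = s := by
  induction s generalizing x with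
  | zero => obtain rfl : x = 0 := by omega
            simp [wt2]
  | succ s ih =>
    have hx2 : x / 2 < 2 ^ s := by rw [pow_succ] at hx; omega
    have hcompl : 2 ^ (s + 1) - 1 - x = 2 * (2 ^ s - 1 - x / 2) + (1 - x % 2) := by
      rw [pow_succ]; omega
    have := ih hx2
    rw [hcompl, wt2_two_mul_add _ (by omega), wt2_eq_wt2_div_two_add x]
    omega

lemma wt2_le_of_lt_two_pow {s x : ℕ} (hx : x < 2 ^ s) : wt2 x ≤ s :=
  (wt2_add_wt2_two_pow_sub_one_sub hx).le.trans' (Nat.le_add_right _ _)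

lemma wt2_two_pow_sub_one (s : ℕ) : wt2 (2 ^ s - 1) = s := by
  simpa [wt2] using wt2_add_wt2_two_pow_sub_one_sub (Nat.one_le_two_pow (n := s))

lemma wt2_two_pow_sub_one_mul {s k : ℕ} (hk : 1 ≤ k) (hks : k ≤ 2 ^ s) :
    wt2 ((2 ^ s - 1) * k) = s := by
  have hsplit : (2 ^ s - 1) * k = (k - 1) * 2 ^ s + (2 ^ s - 1 - (k - 1)) := by
    have hP : 1 ≤ 2 ^ s := Nat.one_le_two_pow
    zify [hP, hk, (by omega : k - 1 ≤ 2 ^ s - 1)]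
    ring
  rw [hsplit, wt2_mul_two_pow_add _ (by omega), wt2_add_wt2_two_pow_sub_one_sub (by omega)]

lemma wt2_eq_sum_range {b x : ℕ} (hx : x < 2 ^ b) :
    wt2 x = ∑ i ∈ range b, x / 2 ^ i % 2 := by
  induction b generalizing x with
  | zero => obtain rfl : x = 0 := by omega
            simp [wt2]
  | succ b ih =>
    have hx2 : x / 2 < 2 ^ b := by rw [pow_succ] at hx; omega
    rw [wt2_eq_wt2_div_two_add, ih hx2]
    simp [Finset.sum_range_succ', pow_succ', Nat.div_div_eq_div_mul]

end BinaryWeight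

section Rotation

variable {m : ℕ}

lemma two_pow_sub_one_odd (hm : 0 < m) : Odd (2 ^ m - 1) :=
  Nat.Even.sub_odd Nat.one_le_two_pow ((Nat.even_pow' hm.ne').2 even_two) odd_one

lemma mul_two_pow_self_modEq (x : ℕ) : x * 2 ^ m ≡ x [MOD 2 ^ m - 1] := by
  simpa using (Nat.modEq_sub (Nat.one_le_two_pow (n := m))).mul_left x

lemma mul_two_pow_mod_eq {x j : ℕ} (hx : x < 2 ^ m - 1) (hj : j ≤ m) :
    x * 2 ^ j % (2 ^ m - 1) = x % 2 ^ (m - j) * 2 ^ j + x / 2 ^ (m - j) := by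
  set A := 2 ^ (m - j)
  set q := x / A
  set r := x % A
  have hAB : A * 2 ^ j = 2 ^ m := by rw [← pow_add, Nat.sub_add_cancel hj]
  have hx' : A * q + r = x := Nat.div_add_mod x A
  have hr : r < A := Nat.mod_lt _ (by positivity)
  have hq : q < 2 ^ j := by
    rw [Nat.div_lt_iff_lt_mul (by positivity), mul_comm, hAB]; omega
  -- swapping the two mixed-radix digits of `x` yields `2 ^ m - 1` only when `x = 2 ^ m - 1`
  have hlt : r * 2 ^ j + q < 2 ^ m - 1 := by
    suffices r * 2 ^ j + q + 1 < A * 2 ^ j by omega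
    rcases Nat.lt_or_ge (r + 1) A with hr' | hr'
    · nlinarith [Nat.mul_le_mul_right (2 ^ j) hr']
    · have hA : A = r + 1 := by omega
      have : A * (q + 1) < A * 2 ^ j := by rw [hAB, mul_add, mul_one]; omega
      nlinarith [Nat.lt_of_mul_lt_mul_left this]
  have hmod : x * 2 ^ j ≡ r * 2 ^ j + q [MOD 2 ^ m - 1] := by
    have hxj : x * 2 ^ j = r * 2 ^ j + q * 2 ^ m := by rw [← hx', ← hAB]; ring
    rw [hxj]
    exact (mul_two_pow_self_modEq q).add_left _
  rw [hmod, Nat.mod_eq_of_lt hlt]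

lemma wt2_mul_two_pow_mod {x j : ℕ} (hx : x < 2 ^ m - 1) (hj : j ≤ m) :
    wt2 (x * 2 ^ j % (2 ^ m - 1)) = wt2 x := by
  have hq : x / 2 ^ (m - j) < 2 ^ j := by
    rw [Nat.div_lt_iff_lt_mul (by positivity), ← pow_add, Nat.add_sub_cancel' hj]; omega
  rw [mul_two_pow_mod_eq hx hj, wt2_mul_two_pow_add _ hq, add_comm,
    ← wt2_mul_two_pow_add _ (Nat.mod_lt _ (by positivity)), Nat.div_add_mod']

lemma mul_two_pow_mod_mod_two {x j : ℕ} (hx : x < 2 ^ m - 1) (hj₀ : 0 < j) (hj : j ≤ m) :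
    x * 2 ^ j % (2 ^ m - 1) % 2 = x / 2 ^ (m - j) % 2 := by
  have : 2 ∣ x % 2 ^ (m - j) * 2 ^ j := (dvd_pow_self 2 hj₀.ne').mul_left _
  rw [mul_two_pow_mod_eq hx hj]
  omega

end Rotation

lemma Nat.count_mul_of_periodic {p : ℕ → Prop} [DecidablePred p] {a : ℕ}
    (hp : Function.Periodic p a) (c : ℕ) : Nat.count p (a * c) = c * Nat.count p a := by
  induction c with
  | zero => simp
  | succ c ih =>
    have hshift (k : ℕ) : p (a * c + k) ↔ p k := by
      rw [add_comm, mul_comm a c]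
      exact Iff.of_eq (hp.nat_mul c k)
    rw [Nat.mul_succ, Nat.count_add, ih]
    simp only [hshift]
    ring

section CyclotomicCoset

variable {m : ℕ}

lemma ell_spec (hm : 0 < m) (x : ℕ) : 0 < ell m x ∧ x * 2 ^ ell m x ≡ x [MOD 2 ^ m - 1] :=
  Nat.sInf_mem (s := {l | 0 < l ∧ x * 2 ^ l ≡ x [MOD 2 ^ m - 1]})
    ⟨m, hm, mul_two_pow_self_modEq x⟩

lemma ell_le (hm : 0 < m) (x : ℕ) : ell m x ≤ m :=
  Nat.sInf_le ⟨hm, mul_two_pow_self_modEq x⟩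

lemma periodic_mul_two_pow_mod (hm : 0 < m) (x : ℕ) :
    Function.Periodic (fun j => x * 2 ^ j % (2 ^ m - 1)) (ell m x) := fun j => by
  simp only [pow_add, mul_comm (2 ^ j), ← mul_assoc]
  exact (ell_spec hm x).2.mul_right _

lemma ell_dvd (hm : 0 < m) (x : ℕ) : ell m x ∣ m := by
  by_contra hndvd
  have hpos : 0 < m % ell m x := Nat.pos_of_ne_zero (mt Nat.dvd_of_mod_eq_zero hndvd)
  have hmod : x * 2 ^ (m % ell m x) ≡ x [MOD 2 ^ m - 1] :=
    ((periodic_mul_two_pow_mod hm x).map_mod_nat m).trans (mul_two_pow_self_modEq x)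
  have : ell m x ≤ m % ell m x := Nat.sInf_le ⟨hpos, hmod⟩
  exact absurd this (not_le.2 (Nat.mod_lt _ (ell_spec hm x).1))

lemma mul_two_pow_mod_mem_coset (hm : 0 < m) (x j : ℕ) :
    x * 2 ^ j % (2 ^ m - 1) ∈ coset m x := by
  rw [← (periodic_mul_two_pow_mod hm x).map_mod_nat j]
  exact mem_image_of_mem _ (mem_range.2 (Nat.mod_lt _ (ell_spec hm x).1))

lemma injOn_mul_two_pow_mod (hm : 0 < m) (x : ℕ) :
    Set.InjOn (fun j => x * 2 ^ j % (2 ^ m - 1)) (range (ell m x)) := by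
  suffices ∀ a b, a < b → b < ell m x → ¬ x * 2 ^ a ≡ x * 2 ^ b [MOD 2 ^ m - 1] by
    intro a ha b hb hab
    simp only [coe_range, Set.mem_Iio] at ha hb
    rcases lt_trichotomy a b with h | rfl | h
    · exact absurd hab (this a b h hb)
    · rfl
    · exact absurd hab.symm (this b a h ha)
  intro a b hab hb hmod
  have hcop : Nat.gcd (2 ^ m - 1) (2 ^ a) = 1 :=
    Nat.Coprime.pow_right _ (Nat.coprime_two_right.2 (two_pow_sub_one_odd hm))
  have hshift : x * 2 ^ (b - a) ≡ x [MOD 2 ^ m - 1] := by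
    refine Nat.ModEq.cancel_right_of_coprime hcop ?_
    rw [mul_assoc, ← pow_add, Nat.sub_add_cancel hab.le]
    exact hmod.symm
  have : ell m x ≤ b - a := Nat.sInf_le ⟨Nat.sub_pos_of_lt hab, hshift⟩
  omega

lemma rho_eq_count (hm : 0 < m) (x : ℕ) :
    rho m x = Nat.count (fun j => x * 2 ^ j % (2 ^ m - 1) % 2 = 0) (ell m x) := by
  rw [rho, coset, filter_image, card_image_of_injOn
    ((injOn_mul_two_pow_mod hm x).mono fun j hj => (mem_filter.1 hj).1),
    Nat.count_eq_card_filter_range]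

lemma count_even_mul_two_pow_mod_add_wt2 {x : ℕ} (hx : x < 2 ^ m - 1) :
    Nat.count (fun j => x * 2 ^ j % (2 ^ m - 1) % 2 = 0) m + wt2 x = m := by
  set f := fun j => x * 2 ^ j % (2 ^ m - 1) % 2
  have hbits : ∑ j ∈ range m, f (j + 1) = wt2 x := by
    rw [wt2_eq_sum_range (b := m) (by omega), ← sum_range_reflect]
    refine sum_congr rfl fun j hj => ?_
    rw [mem_range] at hj
    simp only [f]
    rw [mul_two_pow_mod_mod_two hx (by omega) (by omega)]
    congr 3; omega
  have hrot : ∑ j ∈ range m, f (j + 1) = ∑ j ∈ range m, f j := by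
    have hm : f m = f 0 := by
      simp only [f, pow_zero, mul_one]
      rw [mul_two_pow_self_modEq x]
    have := (sum_range_succ' f m).symm.trans (sum_range_succ f m)
    omega
  rw [Nat.count_eq_card_filter_range, card_filter, ← hbits, hrot, ← sum_add_distrib]
  rw [sum_congr rfl fun j _ => show (if f j = 0 then 1 else 0) + f j = 1 by
    rcases Nat.mod_two_eq_zero_or_one (x * 2 ^ j % (2 ^ m - 1)) with h | h <;> simp [f, h]]
  simp

lemma vv_eq_wt2_mod_two (hm : Even m) {x : ℕ} (hx : x < 2 ^ m - 1) : vv m x = wt2 x % 2 := by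
  have hm0 : 0 < m := Nat.pos_of_ne_zero (by rintro rfl; simp at hx)
  obtain ⟨c, hc⟩ := ell_dvd hm0 x
  have hcount : c * rho m x + wt2 x = m := by
    rw [rho_eq_count hm0, ← Nat.count_mul_of_periodic, ← hc]
    · exact count_even_mul_two_pow_mod_add_wt2 hx
    · exact fun j => congrArg (· % 2 = 0) (periodic_mul_two_pow_mod hm0 x j)
  have hdiv : m * rho m x / ell m x = c * rho m x := by
    rw [show m * rho m x = ell m x * (c * rho m x) by rw [← mul_assoc, ← hc],
      Nat.mul_div_cancel_left _ (ell_spec hm0 x).1]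
  rw [vv, hdiv]
  obtain ⟨k, hk⟩ := hm
  omega

end CyclotomicCoset

section CosetLeader

variable {m : ℕ}

lemma leader_lt_and_wt2_eq {x : ℕ} (hx : x < 2 ^ m - 1) :
    leader m x < 2 ^ m - 1 ∧ wt2 (leader m x) = wt2 x := by
  have hm : 0 < m := Nat.pos_of_ne_zero (by rintro rfl; simp at hx)
  have hxmem : x ∈ coset m x := by
    simpa [Nat.mod_eq_of_lt hx] using mul_two_pow_mod_mem_coset hm x 0
  have hmem : leader m x ∈ coset m x := Nat.sInf_mem (s := {y | y ∈ coset m x}) ⟨x, hxmem⟩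
  obtain ⟨j, hj, hjx⟩ := mem_image.1 hmem
  rw [← hjx]
  exact ⟨Nat.mod_lt _ (by omega),
    wt2_mul_two_pow_mod hx ((mem_range.1 hj).le.trans (ell_le hm x))⟩

lemma mem_Dset_one_of_odd_wt2 {h x : ℕ} (hm : Even m) (hx : x < 2 ^ m - 1)
    (hodd : Odd (wt2 x)) (hone : 1 < wt2 x) (hh : h < wt2 x) : x ∈ Dset m h 1 := by
  obtain ⟨hlt, hwt⟩ := leader_lt_and_wt2_eq hx
  have hne : leader m x ≠ 1 := fun h1 => by
    rw [h1, show wt2 1 = 1 by norm_num [wt2]] at hwt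
    omega
  have hlarge : ¬ (leader m x % 2 = 1 ∧ leader m x ≤ 2 ^ h - 1) := by
    rintro ⟨-, hle⟩
    have h2h := Nat.one_le_two_pow (n := h)
    have := wt2_le_of_lt_two_pow (show leader m x < 2 ^ h by omega)
    omega
  rw [Dset, mem_filter, mem_range, uu, if_neg hne, if_neg hlarge]
  exact ⟨hx, by rw [vv_eq_wt2_mod_two hm hlt, hwt, Nat.odd_iff.1 hodd]⟩

lemma leader_three_mul_two_pow {t : ℕ} (ht : t ≤ m) (hx : 3 * 2 ^ t < 2 ^ m - 1) :
    leader m (3 * 2 ^ t) = 3 := by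
  have hm : 0 < m := Nat.pos_of_ne_zero (by rintro rfl; simp at hx)
  have h3 : 3 ∈ coset m (3 * 2 ^ t) := by
    have ht1 := Nat.one_le_two_pow (n := t)
    have := mul_two_pow_mod_mem_coset hm (3 * 2 ^ t) (m - t)
    rwa [mul_assoc, ← pow_add, Nat.add_sub_cancel' ht, mul_two_pow_self_modEq 3,
      Nat.mod_eq_of_lt (by omega)] at this
  have hle : leader m (3 * 2 ^ t) ≤ 3 := Nat.sInf_le h3
  have hwt := (leader_lt_and_wt2_eq hx).2
  rw [← add_zero (3 * 2 ^ t), wt2_mul_two_pow_add _ (by positivity)] at hwt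
  interval_cases leader m (3 * 2 ^ t) <;> first | rfl | norm_num [wt2] at hwt

lemma epsilon_three {h : ℕ} (hh : 3 ≤ h) : epsilon h 3 = h - 1 := by
  have hP : 2 ≤ 2 ^ (h - 2) := by
    simpa using Nat.pow_le_pow_right two_pos (show 1 ≤ h - 2 by omega)
  have h2h : 2 ^ h = 4 * 2 ^ (h - 2) := by
    rw [show (4 : ℕ) = 2 ^ 2 by rfl, ← pow_add, show 2 + (h - 2) = h by omega]
  rw [epsilon, if_neg (by omega), show h - 1 = h - 2 + 1 by omega,
    Nat.sInf_upward_closed_eq_succ_iff]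
  · simp only [Set.mem_ofPred_eq, pow_succ]
    omega
  · exact fun k₁ k₂ hk h₁ =>
      h₁.trans (Nat.mul_le_mul_right _ (Nat.pow_le_pow_right two_pos hk))

lemma kappa_three_of_even {h : ℕ} (hh : 2 ≤ h) (he : Even h) : kappa h 3 = 1 := by
  rcases hh.eq_or_lt with rfl | hh
  · rfl
  · obtain ⟨k, rfl⟩ := he
    rw [kappa, epsilon_three (by omega)]
    omega

lemma three_mul_two_pow_mem_Dset {h t : ℕ} (hm : Even m) (ht : t ≤ m)
    (hx : 3 * 2 ^ t < 2 ^ m - 1) (hh : 2 ≤ h) (he : Even h) : 3 * 2 ^ t ∈ Dset m h 1 := by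
  have h3 : 3 ≤ 2 ^ h - 1 := by
    have := Nat.pow_le_pow_right two_pos hh
    omega
  have hv : vv m 3 = 0 := by
    rw [vv_eq_wt2_mod_two hm (by have := Nat.one_le_two_pow (n := t); omega)]
    norm_num [wt2]
  rw [Dset, mem_filter, mem_range, uu, leader_three_mul_two_pow ht hx]
  refine ⟨hx, ?_⟩
  rw [if_neg (by norm_num), if_pos ⟨rfl, h3⟩, kappa_three_of_even hh he, hv]

end CosetLeader

lemma mul_mod_eq_sub_mul_of_add_eq {a k k' n : ℕ} (hkk : k + k' = n) (hpos : 0 < a * k')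
    (hle : a * k' ≤ n) : a * k % n = n - a * k' := by
  have ha : 1 ≤ a := Nat.pos_of_ne_zero (by rintro rfl; simp at hpos)
  have hsplit : a * k = n - a * k' + (a - 1) * n := by
    subst hkk
    zify [hle, ha]
    ring
  rw [hsplit, Nat.add_mul_mod_self_right, Nat.mod_eq_of_lt (by omega)]

section Residues

variable {s h k : ℕ}

lemma two_pow_add_two_sub_one_mul_lt (hs : 0 < s) (hk : k ≤ 2 ^ s) :
    (2 ^ (s + 2) - 1) * k < 2 ^ (2 * s + 2) - 1 := by
  have hP : 2 ≤ 2 ^ s := by simpa using Nat.pow_le_pow_right two_pos hs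
  rw [show 2 ^ (s + 2) = 4 * 2 ^ s by ring, show 2 ^ (2 * s + 2) = 4 * 2 ^ s * 2 ^ s by ring]
  zify [(by omega : 1 ≤ 4 * 2 ^ s), (by nlinarith : 1 ≤ 4 * 2 ^ s * 2 ^ s)]
  nlinarith

lemma mul_mem_Dset_of_le (hs : Odd s) (hh : h < s + 2) (hk : 1 ≤ k) (hks : k ≤ 2 ^ s) :
    (2 ^ (s + 2) - 1) * k % (2 ^ (2 * s + 2) - 1) ∈ Dset (2 * s + 2) h 1 := by
  have hlt := two_pow_add_two_sub_one_mul_lt hs.pos hks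
  have hwt : wt2 ((2 ^ (s + 2) - 1) * k) = s + 2 :=
    wt2_two_pow_sub_one_mul hk (hks.trans (Nat.pow_le_pow_right two_pos (by omega)))
  rw [Nat.mod_eq_of_lt hlt]
  exact mem_Dset_one_of_odd_wt2 ⟨s + 1, by ring⟩ hlt (by rw [hwt]; exact hs.add_even even_two)
    (by omega) (by omega)

lemma mul_mem_Dset_of_ge (hs : Odd s) (hs₁ : 1 < s) (hh : h < s)
    (hk₁ : 2 ^ (2 * s + 2) - 2 ^ s - 1 ≤ k) (hk₂ : k ≤ 2 ^ (2 * s + 2) - 2) :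
    (2 ^ (s + 2) - 1) * k % (2 ^ (2 * s + 2) - 1) ∈ Dset (2 * s + 2) h 1 := by
  obtain ⟨k', hk'_def⟩ : ∃ k', k' = 2 ^ (2 * s + 2) - 1 - k := ⟨_, rfl⟩
  have hk' : 1 ≤ k' ∧ k' ≤ 2 ^ s := by
    have := Nat.one_lt_two_pow (n := 2 * s + 2) (by omega)
    omega
  have hlt := two_pow_add_two_sub_one_mul_lt hs.pos hk'.2
  have hwt : wt2 ((2 ^ (s + 2) - 1) * k') = s + 2 :=
    wt2_two_pow_sub_one_mul hk'.1 (hk'.2.trans (Nat.pow_le_pow_right two_pos (by omega)))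
  have hpos : 0 < (2 ^ (s + 2) - 1) * k' :=
    Nat.mul_pos (Nat.sub_pos_of_lt (Nat.one_lt_two_pow (by omega))) hk'.1
  have hcompl := wt2_add_wt2_two_pow_sub_one_sub
    (by omega : (2 ^ (s + 2) - 1) * k' < 2 ^ (2 * s + 2))
  have hwt' : wt2 (2 ^ (2 * s + 2) - 1 - (2 ^ (s + 2) - 1) * k') = s := by omega
  rw [mul_mod_eq_sub_mul_of_add_eq (k' := k') (by omega) hpos hlt.le]
  exact mem_Dset_one_of_odd_wt2 ⟨s + 1, by ring⟩ (by omega) (by rw [hwt']; exact hs)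
    (by omega) (by omega)

lemma mul_two_pow_add_one_mem_Dset (hs : 0 < s) (hh : 2 ≤ h) (he : Even h) :
    (2 ^ (s + 2) - 1) * (2 ^ s + 1) % (2 ^ (2 * s + 2) - 1) ∈ Dset (2 * s + 2) h 1 := by
  have hP : 2 ≤ 2 ^ s := by simpa using Nat.pow_le_pow_right two_pos hs
  have hlt : 3 * 2 ^ s < 2 ^ (2 * s + 2) - 1 := by
    rw [show 2 ^ (2 * s + 2) = 4 * 2 ^ s * 2 ^ s by ring]
    suffices 3 * 2 ^ s + 1 < 4 * 2 ^ s * 2 ^ s by omega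
    nlinarith
  have hsplit : (2 ^ (s + 2) - 1) * (2 ^ s + 1) = 2 ^ (2 * s + 2) - 1 + 3 * 2 ^ s := by
    rw [show 2 ^ (s + 2) = 4 * 2 ^ s by ring, show 2 ^ (2 * s + 2) = 4 * 2 ^ s * 2 ^ s by ring]
    zify [(by omega : 1 ≤ 4 * 2 ^ s), (by nlinarith : 1 ≤ 4 * 2 ^ s * 2 ^ s)]
    ring
  rw [hsplit, Nat.add_mod_left, Nat.mod_eq_of_lt hlt]
  exact three_mul_two_pow_mem_Dset ⟨s + 1, by ring⟩ (by omega) hlt hh he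

lemma mul_two_pow_add_two_mem_Dset (hs : Odd s) (hh : h < s + 2) :
    (2 ^ (s + 2) - 1) * (2 ^ s + 2) % (2 ^ (2 * s + 2) - 1) ∈ Dset (2 * s + 2) h 1 := by
  have hP : 2 ≤ 2 ^ s := by simpa using Nat.pow_le_pow_right two_pos hs.pos
  have hr : 2 ^ s - 1 < 2 ^ (s + 1) := by rw [pow_succ]; omega
  have hlt : 3 * 2 ^ (s + 1) + (2 ^ s - 1) < 2 ^ (2 * s + 2) - 1 := by
    rw [show 2 ^ (2 * s + 2) = 4 * 2 ^ s * 2 ^ s by ring, pow_succ]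
    suffices 7 * 2 ^ s < 4 * 2 ^ s * 2 ^ s by omega
    nlinarith
  have hsplit : (2 ^ (s + 2) - 1) * (2 ^ s + 2)
      = 2 ^ (2 * s + 2) - 1 + (3 * 2 ^ (s + 1) + (2 ^ s - 1)) := by
    rw [show 2 ^ (s + 2) = 4 * 2 ^ s by ring,
      show 2 ^ (2 * s + 2) = 4 * 2 ^ s * 2 ^ s by ring, pow_succ]
    zify [(by omega : 1 ≤ 4 * 2 ^ s), (by nlinarith : 1 ≤ 4 * 2 ^ s * 2 ^ s),
      (by omega : 1 ≤ 2 ^ s)]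
    ring
  have hwt : wt2 (3 * 2 ^ (s + 1) + (2 ^ s - 1)) = s + 2 := by
    rw [wt2_mul_two_pow_add _ hr, wt2_two_pow_sub_one, show wt2 3 = 2 by norm_num [wt2]]
    ring
  rw [hsplit, Nat.add_mod_left, Nat.mod_eq_of_lt hlt]
  exact mem_Dset_one_of_odd_wt2 ⟨s + 1, by ring⟩ hlt (by rw [hwt]; exact hs.add_even even_two)
    (by omega) (by omega)

end Residues

theorem stmt13_general (m h : ℕ) (hm4 : m % 4 = 0) (hh : 0 < h)
    (hh2 : h ≤ (m - 4) / 2) :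
    (Odd h → ∀ k, (1 ≤ k ∧ k ≤ 2 ^ ((m - 2) / 2)) ∨
        (2 ^ m - 2 ^ ((m - 2) / 2) - 1 ≤ k ∧ k ≤ 2 ^ m - 2) →
      (2 ^ ((m + 2) / 2) - 1) * k % (2 ^ m - 1) ∈ Dset m h 1) ∧
    (Even h → ∀ k, (1 ≤ k ∧ k ≤ 2 ^ ((m - 2) / 2) + 2) ∨
        (2 ^ m - 2 ^ ((m - 2) / 2) - 1 ≤ k ∧ k ≤ 2 ^ m - 2) →
      (2 ^ ((m + 2) / 2) - 1) * k % (2 ^ m - 1) ∈ Dset m h 1) := by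
  obtain ⟨s, rfl, hs⟩ : ∃ s, m = 2 * s + 2 ∧ Odd s :=
    ⟨(m - 2) / 2, by omega, ⟨m / 4 - 1, by omega⟩⟩
  rw [show (2 * s + 2 + 2) / 2 = s + 2 by omega, show (2 * s + 2 - 2) / 2 = s by omega]
  have hhs : h < s := by omega
  refine ⟨fun _ k hk => ?_, fun he k hk => ?_⟩
  · rcases hk with ⟨hk₁, hk₂⟩ | ⟨hk₁, hk₂⟩
    · exact mul_mem_Dset_of_le hs (by omega) hk₁ hk₂
    · exact mul_mem_Dset_of_ge hs (by omega) hhs hk₁ hk₂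
  · rcases hk with ⟨hk₁, hk₂⟩ | ⟨hk₁, hk₂⟩
    · obtain hk₂ | rfl | rfl : k ≤ 2 ^ s ∨ k = 2 ^ s + 1 ∨ k = 2 ^ s + 2 := by omega
      · exact mul_mem_Dset_of_le hs (by omega) hk₁ hk₂
      · exact mul_two_pow_add_one_mem_Dset hs.pos (by obtain ⟨r, rfl⟩ := he; omega) he
      · exact mul_two_pow_add_two_mem_Dset hs (by omega)
    · exact mul_mem_Dset_of_ge hs (by omega) hhs hk₁ hk₂

theorem stmt13 (m h : ℕ) (hm4 : m % 4 = 0) (hm : 8 ≤ m) (hh : 0 < h)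
    (hh2 : h ≤ (m - 4) / 2) :
    (Odd h → ∀ k, (1 ≤ k ∧ k ≤ 2 ^ ((m - 2) / 2)) ∨
        (2 ^ m - 2 ^ ((m - 2) / 2) - 1 ≤ k ∧ k ≤ 2 ^ m - 2) →
      (2 ^ ((m + 2) / 2) - 1) * k % (2 ^ m - 1) ∈ Dset m h 1) ∧
    (Even h → ∀ k, (1 ≤ k ∧ k ≤ 2 ^ ((m - 2) / 2) + 2) ∨
        (2 ^ m - 2 ^ ((m - 2) / 2) - 1 ≤ k ∧ k ≤ 2 ^ m - 2) →
      (2 ^ ((m + 2) / 2) - 1) * k % (2 ^ m - 1) ∈ Dset m h 1) :=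
  stmt13_general m h hm4 hh hh2
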